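/- For any positive integer n and real number a, Σ_{k=0}^{n-1} C(a,k)*C(-1-a,k)*C(2k,k)/4^k · (15k^3 - (4a^2(a+1)^2 - a(a+1) + 1)k - a(a+1)(2a(a+1)-1)) = 2n^3(3n + 2a(a+1) - 4) · C(a,n)*C(-1-a,n)*C(2n,n)/4^n. -/

import Mathlib

/-- Generalized binomial coefficient `C(x, k) = x(x-1)⋯(x-k+1)/k!` for real `x`. -/
noncomputable def gbc (x : ℝ) (k : ℕ) : ℝ :=
  (∏ i ∈ Finset.range k, (x - i)) / (Nat.factorial k)

/-! The summand `t k = C(a,k) C(-1-a,k) C(2k,k) / 4^k` is hypergeometric, with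
`t (k+1) / t k = (k - a)(k + 1 + a)(2k + 1) / (2 (k + 1)^3)`. Hence the sum telescopes
(Gosper/WZ): with `F k = 2 k^3 (3k + 2a(a+1) - 4) t k` one checks `F (k+1) - F k = t k · P k`,
where `P` is the cubic factor of the summand, a rational-function identity in `k` and `a`. -/

lemma gbc_succ (x : ℝ) (n : ℕ) : gbc x (n + 1) = gbc x n * (x - n) / (n + 1) := by
  simp only [gbc, Finset.prod_range_succ, Nat.factorial_succ]
  push_cast
  rw [div_mul_eq_mul_div, div_div, mul_comm (Nat.factorial n : ℝ) ((n : ℝ) + 1)]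

lemma centralBinom_succ_real (n : ℕ) :
    (Nat.centralBinom (n + 1) : ℝ) = Nat.centralBinom n * (2 * (2 * n + 1)) / (n + 1) := by
  rw [eq_div_iff (by positivity), mul_comm, mul_comm (Nat.centralBinom n : ℝ)]
  exact_mod_cast Nat.succ_mul_centralBinom_succ n

noncomputable def binomTerm (a : ℝ) (k : ℕ) : ℝ :=
  gbc a k * gbc (-1 - a) k * (Nat.choose (2 * k) k) / 4 ^ k

lemma binomTerm_succ (a : ℝ) (k : ℕ) :
    binomTerm a (k + 1) =
      binomTerm a k * ((k - a) * (k + 1 + a) * (2 * k + 1)) / (2 * (k + 1) ^ 3) := by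
  have hk : (k : ℝ) + 1 ≠ 0 := by positivity
  simp only [binomTerm, ← Nat.centralBinom_eq_two_mul_choose, centralBinom_succ_real, gbc_succ]
  field_simp
  ring

lemma binomTerm_telescope (a : ℝ) (k : ℕ) :
    2 * ((k + 1 : ℕ) : ℝ) ^ 3 * (3 * ((k + 1 : ℕ) : ℝ) + 2 * a * (a + 1) - 4) *
        binomTerm a (k + 1) =
      2 * (k : ℝ) ^ 3 * (3 * k + 2 * a * (a + 1) - 4) * binomTerm a k +
        binomTerm a k *
          (15 * (k : ℝ) ^ 3 - (4 * a ^ 2 * (a + 1) ^ 2 - a * (a + 1) + 1) * k -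
            a * (a + 1) * (2 * a * (a + 1) - 1)) := by
  have hk : (k : ℝ) + 1 ≠ 0 := by positivity
  rw [binomTerm_succ]
  push_cast
  field_simp
  ring

theorem stmt13_general (n : ℕ) (a : ℝ) :
    ∑ k ∈ Finset.range n,
        gbc a k * gbc (-1 - a) k * (Nat.choose (2 * k) k) / 4 ^ k *
          (15 * (k : ℝ) ^ 3 - (4 * a ^ 2 * (a + 1) ^ 2 - a * (a + 1) + 1) * k -
            a * (a + 1) * (2 * a * (a + 1) - 1)) =
      2 * (n : ℝ) ^ 3 * (3 * n + 2 * a * (a + 1) - 4) *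
        (gbc a n * gbc (-1 - a) n * (Nat.choose (2 * n) n) / 4 ^ n) :=
  Finset.sum_range_induction _ (fun m => 2 * (m : ℝ) ^ 3 * (3 * m + 2 * a * (a + 1) - 4) *
    binomTerm a m) (by simp) n fun k _ => binomTerm_telescope a k

theorem stmt13 (n : ℕ) (hn : 0 < n) (a : ℝ) :
    ∑ k ∈ Finset.range n,
        gbc a k * gbc (-1 - a) k * (Nat.choose (2 * k) k) / 4 ^ k *
          (15 * (k : ℝ) ^ 3 - (4 * a ^ 2 * (a + 1) ^ 2 - a * (a + 1) + 1) * k -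
            a * (a + 1) * (2 * a * (a + 1) - 1)) =
      2 * (n : ℝ) ^ 3 * (3 * n + 2 * a * (a + 1) - 4) *
        (gbc a n * gbc (-1 - a) n * (Nat.choose (2 * n) n) / 4 ^ n) :=
  stmt13_general n a
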